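/- Let k ≥ 4 be even and let H be a blue line forest on m > k/2 vertices with exactly two components. Then r̃_H(C_k, P_{m − k/2}) ≤ k: within k rounds Builder can force a red C_k or a blue path on m − k/2 vertices. -/

import Mathlib

open SimpleGraph

/-- A board state: the set of red edges and the set of blue edges. -/
abbrev Board : Type := Set (Sym2 ℕ) × Set (Sym2 ℕ)

/-- The set of already colored edges of a board. -/
def Board.colored (B : Board) : Set (Sym2 ℕ) := B.1 ∪ B.2

/-- A Builder strategy selects an edge given the current board. -/
abbrev BuilderStrat : Type := Board → Sym2 ℕ

/-- A Painter strategy colors the selected edge (true = red, false = blue). -/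
abbrev PainterStrat : Type := Board → Sym2 ℕ → Bool

/-- The board after `t` rounds of play from `init`. -/
def playGame (b : BuilderStrat) (p : PainterStrat) (init : Board) : ℕ → Board
  | 0 => init
  | t + 1 =>
      let B := playGame b p init t
      let e := b B
      if p B e then (insert e B.1, B.2) else (B.1, insert e B.2)

/-- Builder's strategy is valid from `init`: along any play it always selects a
previously unselected non-loop edge. -/
def ValidFrom (b : BuilderStrat) (init : Board) : Prop :=
  ∀ p : PainterStrat, ∀ t : ℕ,
    ¬ (b (playGame b p init t)).IsDiag ∧
      b (playGame b p init t) ∉ (playGame b p init t).colored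

/-- Builder can force the winning condition `W` within `t` rounds, starting from `init`. -/
def BuilderWinsIn (init : Board) (W : Board → Prop) (t : ℕ) : Prop :=
  ∃ b : BuilderStrat, ValidFrom b init ∧
    ∀ p : PainterStrat, ∃ s, s ≤ t ∧ W (playGame b p init s)

/-- `G` contains a copy of `H`. -/
def HasCopy {α β : Type} (H : SimpleGraph α) (G : SimpleGraph β) : Prop :=
  ∃ f : α ↪ β, ∀ x y, H.Adj x y → G.Adj (f x) (f y)

/-- The red part of the board contains a copy of `H`. -/
def RedCopy {α : Type} (H : SimpleGraph α) (B : Board) : Prop :=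
  HasCopy H (fromEdgeSet B.1)

/-- The blue part of the board contains a copy of `H`. -/
def BlueCopy {α : Type} (H : SimpleGraph α) (B : Board) : Prop :=
  HasCopy H (fromEdgeSet B.2)

/-- The empty board. -/
def emptyBoard : Board := (∅, ∅)

/-- Winning condition: a red `C_k` or a blue `C_n`. -/
def WinCC (k n : ℕ) (B : Board) : Prop :=
  RedCopy (cycleGraph k) B ∨ BlueCopy (cycleGraph n) B

/-- Winning condition: a red `C_k` or a blue path on `n` vertices. -/
def WinCP (k n : ℕ) (B : Board) : Prop :=
  RedCopy (cycleGraph k) B ∨ BlueCopy (pathGraph n) B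

/-- A board consisting of a single blue cycle on the vertices `0, …, m-1`. -/
def blueCycleBoard (m : ℕ) : Board :=
  (∅, {e | ∃ i : ℕ, i < m ∧ e = s(i, (i + 1) % m)})

/-- A board consisting of a single blue path on the vertices `0, …, m-1`. -/
def bluePathBoard (m : ℕ) : Board :=
  (∅, {e | ∃ i : ℕ, i + 1 < m ∧ e = s(i, i + 1)})

/-! When both blue paths have more than `k/2` vertices, Builder draws the `k`-cycle that zigzags
between the last `k/2` vertices of the first path and the last `k/2` vertices of the second.
Every edge `u a v b` of this cycle joins the paths into a blue path `u 0 … u a v b … v 0` on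
`a + b + 2 ≥ m - k/2` vertices, so Painter must either colour all `k` edges red or give Builder
that blue path. If one of the paths has at most `k/2` vertices, the other one already has at
least `m - k/2`. -/

section Game

variable {b : BuilderStrat} {p : PainterStrat} {init : Board}

lemma playGame_le_succ (t : ℕ) : playGame b p init t ≤ playGame b p init (t + 1) := by
  simp only [playGame]
  split <;> simp [Prod.le_def, Set.subset_insert]

lemma monotone_playGame : Monotone (playGame b p init) :=
  monotone_nat_of_le_succ playGame_le_succ

lemma colored_playGame_succ (t : ℕ) :
    (playGame b p init (t + 1)).colored =
      insert (b (playGame b p init t)) (playGame b p init t).colored := by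
  simp only [playGame, Board.colored]
  split <;> simp [Set.insert_union, Set.union_insert]

lemma finite_colored_playGame (h : init.colored.Finite) (t : ℕ) :
    (playGame b p init t).colored.Finite := by
  induction t with
  | zero => exact h
  | succ t ih => rw [colored_playGame_succ]; exact ih.insert _

lemma validFrom_of_finite (h : init.colored.Finite)
    (hb : ∀ B : Board, B.colored.Finite → ¬ (b B).IsDiag ∧ b B ∉ B.colored) :
    ValidFrom b init :=
  fun _ t => hb _ (finite_colored_playGame h t)

end Game

noncomputable def freshEdge (B : Board) : Sym2 ℕ :=
  Classical.epsilon fun e => ¬ e.IsDiag ∧ e ∉ B.colored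

lemma freshEdge_spec {B : Board} (h : B.colored.Finite) :
    ¬ (freshEdge B).IsDiag ∧ freshEdge B ∉ B.colored := by
  have hinf : (Set.range fun n : ℕ => s(0, n + 1)).Infinite :=
    Set.infinite_range_of_injective fun a b hab => by simpa using Sym2.congr_right.1 hab
  obtain ⟨_, ⟨n, rfl⟩, hn⟩ := hinf.exists_notMem_finite h
  exact Classical.epsilon_spec (p := fun e => ¬ e.IsDiag ∧ e ∉ B.colored) ⟨_, by simp, hn⟩

lemma builderWinsIn_of_init {init : Board} {W : Board → Prop} (h : init.colored.Finite)
    (hW : W init) (t : ℕ) : BuilderWinsIn init W t :=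
  ⟨freshEdge, validFrom_of_finite h fun _ => freshEdge_spec, fun _ => ⟨0, t.zero_le, hW⟩⟩

section ListStrategy

open Classical in
/-- `ValidFrom` constrains every round, so once `L` is used up Builder keeps drawing fresh edges. -/
noncomputable def listStrat (L : List (Sym2 ℕ)) : BuilderStrat := fun B =>
  (L.find? fun e => e ∉ B.colored).getD (freshEdge B)

variable {L : List (Sym2 ℕ)} {init : Board}

lemma validFrom_listStrat (hdiag : ∀ e ∈ L, ¬ e.IsDiag) (h : init.colored.Finite) :
    ValidFrom (listStrat L) init := by
  classical
  refine validFrom_of_finite h fun B hB => ?_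
  unfold listStrat
  cases hfind : L.find? fun e => e ∉ B.colored with
  | none => exact freshEdge_spec hB
  | some e => exact ⟨hdiag e (List.mem_of_find?_eq_some hfind), by simpa using List.find?_some hfind⟩

lemma listStrat_eq_getElem (hnd : L.Nodup) {B : Board} {t : ℕ} (ht : t < L.length)
    (hcol : ∀ e ∈ L, e ∈ B.colored ↔ e ∈ L.take t) : listStrat L B = L[t] := by
  classical
  have hnew : L[t] ∉ L.take t := by
    rw [List.mem_take_iff_getElem]
    rintro ⟨j, hj, hjt⟩
    have := (hnd.getElem_inj_iff).1 hjt
    omega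
  have hfind : (L.find? fun e => e ∉ B.colored) = some L[t] := by
    refine List.find?_eq_some_iff_getElem.2 ⟨?_, t, ht, rfl, fun j hj => ?_⟩
    · simpa [hcol _ (List.getElem_mem ht)] using hnew
    · have : L[j] ∈ L.take t := List.mem_take_iff_getElem.2 ⟨j, by omega, rfl⟩
      simpa [hcol _ (List.getElem_mem _)] using this
  unfold listStrat
  rw [hfind]
  rfl

lemma colored_playGame_listStrat (hnd : L.Nodup) (hfresh : ∀ e ∈ L, e ∉ init.colored)
    (p : PainterStrat) {t : ℕ} (ht : t ≤ L.length) :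
    (playGame (listStrat L) p init t).colored = init.colored ∪ {e | e ∈ L.take t} := by
  induction t with
  | zero => simp [playGame]
  | succ t ih =>
    have ih := ih (by omega)
    have hplay : listStrat L (playGame (listStrat L) p init t) = L[t] :=
      listStrat_eq_getElem hnd (by omega) fun e he => by simp [ih, hfresh e he]
    have htake : L.take (t + 1) = L.take t ++ [L[t]] := by
      rw [List.take_add_one, List.getElem?_eq_getElem (by omega)]
      rfl
    rw [colored_playGame_succ, hplay, ih, htake]
    ext e
    simp only [Set.mem_insert_iff, Set.mem_union, Set.mem_ofPred_eq, List.mem_append,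
      List.mem_singleton]
    tauto

theorem builderWinsIn_of_list {W : Board → Prop} (hnd : L.Nodup) (hdiag : ∀ e ∈ L, ¬ e.IsDiag)
    (hfresh : ∀ e ∈ L, e ∉ init.colored) (hfin : init.colored.Finite)
    (hW : ∀ B : Board, init ≤ B → (∀ e ∈ L, e ∈ B.colored) → W B) :
    BuilderWinsIn init W L.length := by
  refine ⟨listStrat L, validFrom_listStrat hdiag hfin, fun p => ⟨L.length, le_rfl, ?_⟩⟩
  refine hW _ (monotone_playGame L.length.zero_le) fun e he => ?_
  rw [colored_playGame_listStrat hnd hfresh p le_rfl, List.take_length]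
  exact Or.inr he

end ListStrategy

section Copies

variable {w : ℕ → ℕ} {n k : ℕ} {S : Set (Sym2 ℕ)}

def pathEdges (w : ℕ → ℕ) (n : ℕ) : Set (Sym2 ℕ) := {e | ∃ j, j + 1 < n ∧ e = s(w j, w (j + 1))}

lemma finite_pathEdges : (pathEdges w n).Finite :=
  ((Set.finite_Iio n).image fun j => s(w j, w (j + 1))).subset <| by
    rintro _ ⟨j, hj, rfl⟩
    exact ⟨j, by simp only [Set.mem_Iio]; omega, rfl⟩

lemma exists_eq_of_mem_pathEdges {e : Sym2 ℕ} {x : ℕ} (he : e ∈ pathEdges w n) (hx : x ∈ e) :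
    ∃ j < n, x = w j := by
  obtain ⟨j, hj, rfl⟩ := he
  rcases Sym2.mem_iff.1 hx with rfl | rfl
  exacts [⟨j, by omega, rfl⟩, ⟨j + 1, hj, rfl⟩]

def finEmbedding (hw : Set.InjOn w (Set.Iio n)) : Fin n ↪ ℕ :=
  ⟨fun i => w i, fun x y h => Fin.ext (hw x.isLt y.isLt h)⟩

@[simp]
lemma finEmbedding_apply (hw : Set.InjOn w (Set.Iio n)) (i : Fin n) : finEmbedding hw i = w i :=
  rfl

lemma hasCopy_pathGraph (hw : Set.InjOn w (Set.Iio n)) (hS : pathEdges w n ⊆ S) :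
    HasCopy (pathGraph n) (fromEdgeSet S) := by
  refine ⟨finEmbedding hw, fun x y hxy => ⟨?_, fun h => hxy.ne ((finEmbedding hw).injective h)⟩⟩
  rcases pathGraph_adj.1 hxy with h | h
  · exact hS ⟨x, h ▸ y.isLt, by simp [← h]⟩
  · exact hS ⟨y, h ▸ x.isLt, by simp [← h, Sym2.eq_swap]⟩

lemma HasCopy.pathGraph_of_le {β : Type} {G : SimpleGraph β} {n' : ℕ} (h : n ≤ n')
    (hG : HasCopy (pathGraph n') G) : HasCopy (pathGraph n) G := by
  obtain ⟨f, hf⟩ := hG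
  exact ⟨(Fin.castLEEmb h).trans f, fun x y hxy => hf _ _ (by simpa [pathGraph_adj] using hxy)⟩

def cycleEdges (w : ℕ → ℕ) (k : ℕ) : List (Sym2 ℕ) :=
  List.ofFn fun i : Fin k => s(w i, w ((i + 1) % k))

lemma length_cycleEdges : (cycleEdges w k).length = k := List.length_ofFn

lemma mem_cycleEdges {e : Sym2 ℕ} :
    e ∈ cycleEdges w k ↔ ∃ i < k, s(w i, w ((i + 1) % k)) = e := by
  simp [cycleEdges, List.mem_ofFn, Fin.exists_iff]

lemma nodup_cycleEdges (hk : 3 ≤ k) (hw : Set.InjOn w (Set.Iio k)) : (cycleEdges w k).Nodup := by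
  have hw' : ∀ {x y}, x < k → y < k → w x = w y → x = y := fun hx hy h => hw hx hy h
  have hsucc : ∀ i < k, (i + 1) % k = i + 1 ∨ (i + 1 = k ∧ (i + 1) % k = 0) := fun i hi => by
    rcases Nat.lt_or_ge (i + 1) k with h | h
    · exact Or.inl (Nat.mod_eq_of_lt h)
    · exact Or.inr ⟨by omega, by rw [show i + 1 = k by omega, Nat.mod_self]⟩
  refine List.nodup_ofFn.2 fun x y hxy => Fin.ext ?_
  have hx := hsucc x x.isLt
  have hy := hsucc y y.isLt
  rcases Sym2.eq_iff.1 hxy with ⟨h₁, -⟩ | ⟨h₁, h₂⟩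
  · exact hw' x.isLt y.isLt h₁
  · have := hw' x.isLt (Nat.mod_lt _ (by omega)) h₁
    have := hw' (Nat.mod_lt _ (by omega)) y.isLt h₂
    omega

lemma hasCopy_cycleGraph (hw : Set.InjOn w (Set.Iio k)) (hS : ∀ e ∈ cycleEdges w k, e ∈ S) :
    HasCopy (cycleGraph k) (fromEdgeSet S) := by
  refine ⟨finEmbedding hw, fun x y hxy => ⟨?_, fun h => hxy.ne ((finEmbedding hw).injective h)⟩⟩
  obtain _ | _ | k := k
  · exact x.elim0
  · exact (cycleGraph_one_adj hxy).elim
  have hedge : ∀ i : Fin (k + 2), s(w i, w ((i + 1 : Fin (k + 2)) : ℕ)) ∈ S := fun i =>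
    hS _ (mem_cycleEdges.2 ⟨i, i.isLt, by simp [Fin.val_add]⟩)
  rcases cycleGraph_adj.1 hxy with h | h
  · simpa [sub_eq_iff_eq_add'.1 h, Sym2.eq_swap] using hedge y
  · simpa [sub_eq_iff_eq_add'.1 h] using hedge x

end Copies

section Zigzag

variable {u v : ℕ → ℕ} {m₁ m₂ r : ℕ}

/-- `u (m₁ - 1), v (m₂ - r), u (m₁ - 2), v (m₂ - r + 1), …, u (m₁ - r), v (m₂ - 1)`. -/
def zigzag (u v : ℕ → ℕ) (m₁ m₂ r : ℕ) (i : ℕ) : ℕ :=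
  if i % 2 = 0 then u (m₁ - 1 - i / 2) else v (m₂ - r + i / 2)

lemma injOn_zigzag (hu : Set.InjOn u (Set.Iio m₁)) (hv : Set.InjOn v (Set.Iio m₂))
    (hdisj : ∀ x y, x < m₁ → y < m₂ → u x ≠ v y) (h₁ : r ≤ m₁) (h₂ : r ≤ m₂) :
    Set.InjOn (zigzag u v m₁ m₂ r) (Set.Iio (r + r)) := by
  intro x hx y hy hxy
  simp only [Set.mem_Iio] at hx hy
  by_cases px : x % 2 = 0 <;> by_cases py : y % 2 = 0 <;>
    simp only [zigzag, px, py, if_true, if_false] at hxy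
  · have := hu (Set.mem_Iio.2 (by omega)) (Set.mem_Iio.2 (by omega)) hxy
    omega
  · exact absurd hxy (hdisj _ _ (by omega) (by omega))
  · exact absurd hxy.symm (hdisj _ _ (by omega) (by omega))
  · have := hv (Set.mem_Iio.2 (by omega)) (Set.mem_Iio.2 (by omega)) hxy
    omega

lemma exists_of_mem_cycleEdges_zigzag (h₁ : r ≤ m₁) (h₂ : r ≤ m₂) {e : Sym2 ℕ}
    (he : e ∈ cycleEdges (zigzag u v m₁ m₂ r) (r + r)) :
    ∃ a < m₁, ∃ b < m₂, m₁ + m₂ ≤ a + b + 2 + r ∧ e = s(u a, v b) := by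
  obtain ⟨i, hi, rfl⟩ := mem_cycleEdges.1 he
  by_cases pi : i % 2 = 0
  · refine ⟨m₁ - 1 - i / 2, by omega, m₂ - r + i / 2, by omega, by omega, ?_⟩
    rw [Nat.mod_eq_of_lt (show i + 1 < r + r by omega)]
    simp [zigzag, pi, show (i + 1) % 2 ≠ 0 by omega, show (i + 1) / 2 = i / 2 by omega]
  by_cases hlast : i + 1 = r + r
  · refine ⟨m₁ - 1, by omega, m₂ - 1, by omega, by omega, ?_⟩
    rw [hlast, Nat.mod_self]
    simp [zigzag, pi, show m₂ - r + i / 2 = m₂ - 1 by omega, Sym2.eq_swap]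
  · refine ⟨m₁ - 1 - (i + 1) / 2, by omega, m₂ - r + i / 2, by omega, by omega, ?_⟩
    rw [Nat.mod_eq_of_lt (show i + 1 < r + r by omega)]
    simp [zigzag, pi, show (i + 1) % 2 = 0 by omega, Sym2.eq_swap]

end Zigzag

section TwoPaths

variable {u v : ℕ → ℕ} {m₁ m₂ a b : ℕ} {S : Set (Sym2 ℕ)}

lemma finite_colored_pathEdges_union :
    (Board.colored (∅, pathEdges u m₁ ∪ pathEdges v m₂)).Finite := by
  simpa [Board.colored] using finite_pathEdges.union finite_pathEdges

lemma crossEdge_notMem_pathEdges (hdisj : ∀ x y, x < m₁ → y < m₂ → u x ≠ v y) (ha : a < m₁)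
    (hb : b < m₂) : s(u a, v b) ∉ pathEdges u m₁ ∪ pathEdges v m₂ := by
  rintro (h | h)
  · obtain ⟨j, hj, hvb⟩ := exists_eq_of_mem_pathEdges h (Sym2.mem_mk_right (u a) (v b))
    exact hdisj j b hj hb hvb.symm
  · obtain ⟨j, hj, hua⟩ := exists_eq_of_mem_pathEdges h (Sym2.mem_mk_left (u a) (v b))
    exact hdisj a j ha hj hua

/-- The edge `u a v b` joins the two paths into the path `u 0, …, u a, v b, …, v 0`. -/
lemma hasCopy_pathGraph_of_crossEdge (hu : Set.InjOn u (Set.Iio m₁))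
    (hv : Set.InjOn v (Set.Iio m₂)) (hdisj : ∀ x y, x < m₁ → y < m₂ → u x ≠ v y)
    (hS : pathEdges u m₁ ∪ pathEdges v m₂ ⊆ S) (ha : a < m₁) (hb : b < m₂)
    (hbr : s(u a, v b) ∈ S) : HasCopy (pathGraph (a + b + 2)) (fromEdgeSet S) := by
  refine hasCopy_pathGraph (w := fun i => if i ≤ a then u i else v (a + b + 1 - i)) ?_ ?_
  · intro x hx y hy hxy
    simp only [Set.mem_Iio] at hx hy
    by_cases h₁ : x ≤ a <;> by_cases h₂ : y ≤ a <;> simp only [h₁, h₂, if_true, if_false] at hxy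
    · exact hu (Set.mem_Iio.2 (by omega)) (Set.mem_Iio.2 (by omega)) hxy
    · exact absurd hxy (hdisj _ _ (by omega) (by omega))
    · exact absurd hxy.symm (hdisj _ _ (by omega) (by omega))
    · have := hv (Set.mem_Iio.2 (by omega)) (Set.mem_Iio.2 (by omega)) hxy
      omega
  · rintro _ ⟨j, hj, rfl⟩
    by_cases h₁ : j + 1 ≤ a
    · simpa [h₁, show j ≤ a by omega] using hS (Or.inl ⟨j, by omega, rfl⟩)
    by_cases h₂ : j = a
    · simpa [h₂] using hbr
    · have hv' := hS (Or.inr ⟨a + b + 1 - (j + 1), by omega, rfl⟩)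
      rw [show a + b + 1 - (j + 1) + 1 = a + b + 1 - j by omega, Sym2.eq_swap] at hv'
      simpa [h₁, h₂, show ¬ j ≤ a by omega] using hv'

theorem builderWinsIn_cycleEdges_zigzag (hr : 2 ≤ r) (hu : Set.InjOn u (Set.Iio m₁))
    (hv : Set.InjOn v (Set.Iio m₂)) (hdisj : ∀ x y, x < m₁ → y < m₂ → u x ≠ v y)
    (h₁ : r ≤ m₁) (h₂ : r ≤ m₂) :
    BuilderWinsIn (∅, pathEdges u m₁ ∪ pathEdges v m₂) (WinCP (r + r) (m₁ + m₂ - r)) (r + r) := by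
  have hzig := injOn_zigzag hu hv hdisj h₁ h₂
  set L := cycleEdges (zigzag u v m₁ m₂ r) (r + r)
  suffices BuilderWinsIn _ (WinCP (r + r) (m₁ + m₂ - r)) L.length by
    rwa [length_cycleEdges] at this
  refine builderWinsIn_of_list (nodup_cycleEdges (by omega) hzig) (fun e he => ?_)
    (fun e he => ?_) finite_colored_pathEdges_union fun B hB hcol => ?_
  · obtain ⟨a, ha, b, hb, -, rfl⟩ := exists_of_mem_cycleEdges_zigzag h₁ h₂ he
    exact Sym2.mk_isDiag_iff.not.2 (hdisj a b ha hb)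
  · obtain ⟨a, ha, b, hb, -, rfl⟩ := exists_of_mem_cycleEdges_zigzag h₁ h₂ he
    simpa [Board.colored] using crossEdge_notMem_pathEdges hdisj ha hb
  by_cases hred : ∀ e ∈ L, e ∈ B.1
  · exact Or.inl (hasCopy_cycleGraph hzig hred)
  push Not at hred
  obtain ⟨e, he, hblue⟩ := hred
  obtain ⟨a, ha, b, hb, hab, rfl⟩ := exists_of_mem_cycleEdges_zigzag h₁ h₂ he
  exact Or.inr ((hasCopy_pathGraph_of_crossEdge hu hv hdisj hB.2 ha hb
    ((hcol _ he).resolve_left hblue)).pathGraph_of_le (by omega))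

end TwoPaths

theorem join_two_paths_even_general (k m m₁ m₂ : ℕ) (hk : 4 ≤ k) (hke : Even k)
    (hsum : m₁ + m₂ = m)
    (u v : ℕ → ℕ)
    (hu : ∀ x y, x < m₁ → y < m₁ → u x = u y → x = y)
    (hv : ∀ x y, x < m₂ → y < m₂ → v x = v y → x = y)
    (hdisj : ∀ x y, x < m₁ → y < m₂ → u x ≠ v y) :
    BuilderWinsIn
      (∅, {e | (∃ j : ℕ, j + 1 < m₁ ∧ e = s(u j, u (j + 1))) ∨
               (∃ j : ℕ, j + 1 < m₂ ∧ e = s(v j, v (j + 1)))})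
      (WinCP k (m - k / 2)) k := by
  obtain ⟨r, rfl⟩ := hke
  rw [show (r + r) / 2 = r by omega]
  replace hu : Set.InjOn u (Set.Iio m₁) := fun x hx y hy => hu x y hx hy
  replace hv : Set.InjOn v (Set.Iio m₂) := fun x hx y hy => hv x y hx hy
  by_cases hshort : m₂ ≤ r ∨ m₁ ≤ r
  · refine builderWinsIn_of_init finite_colored_pathEdges_union (Or.inr ?_) _
    rcases hshort with h | h
    · exact (hasCopy_pathGraph hu Set.subset_union_left).pathGraph_of_le (by omega)
    · exact (hasCopy_pathGraph hv Set.subset_union_right).pathGraph_of_le (by omega)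
  push Not at hshort
  exact hsum ▸ builderWinsIn_cycleEdges_zigzag (by omega) hu hv hdisj hshort.2.le hshort.1.le

/-- For even `k ≥ 4` and a blue line forest on `m > k/2` vertices with exactly two
components, `r̃_H(C_k, P_{m - k/2}) ≤ k`. -/
theorem join_two_paths_even (k m m₁ m₂ : ℕ) (hk : 4 ≤ k) (hke : Even k)
    (hm : k / 2 < m) (hsum : m₁ + m₂ = m) (h1 : 1 ≤ m₁) (h2 : 1 ≤ m₂)
    (u v : ℕ → ℕ)
    (hu : ∀ x y, x < m₁ → y < m₁ → u x = u y → x = y)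
    (hv : ∀ x y, x < m₂ → y < m₂ → v x = v y → x = y)
    (hdisj : ∀ x y, x < m₁ → y < m₂ → u x ≠ v y) :
    BuilderWinsIn
      (∅, {e | (∃ j : ℕ, j + 1 < m₁ ∧ e = s(u j, u (j + 1))) ∨
               (∃ j : ℕ, j + 1 < m₂ ∧ e = s(v j, v (j + 1)))})
      (WinCP k (m - k / 2)) k :=
  join_two_paths_even_general k m m₁ m₂ hk hke hsum u v hu hv hdisj
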